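/- arXiv:2108.12580 — 5 statements merged into one kernel-verified Lean document; each statement's English description precedes it below -/
import Mathlib

section
/- Let V be a real inner product space, V₁, V₂ subspaces with |(v₁, v₂)| ≤ γ‖v₁‖‖v₂‖ for all v₁ ∈ V₁, v₂ ∈ V₂ and some γ ∈ [0, 1). Then for any a₁, b₁ ∈ V₁ and a₂, b₂ ∈ V₂, (1/Δt)(‖b₁‖² + ‖b₂‖²) + (1/Δt)((a₂, b₁) + (a₁, b₂)) ≥ ((2 − γ)/(2Δt))(‖b₁‖² + ‖b₂‖²) − (γ/(2Δt))(‖a₁‖² + ‖a₂‖²), for any Δt > 0. -/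
open scoped RealInnerProductSpace

lemma neg_half_mul_norm_sq_add_le_inner {V : Type*} [NormedAddCommGroup V]
    [InnerProductSpace ℝ V] {γ : ℝ} (hγ : 0 ≤ γ) {x y : V}
    (hxy : |⟪x, y⟫| ≤ γ * ‖x‖ * ‖y‖) :
    -(γ / 2 * (‖x‖ ^ 2 + ‖y‖ ^ 2)) ≤ ⟪x, y⟫ := by
  have amgm : γ * ‖x‖ * ‖y‖ ≤ γ / 2 * (‖x‖ ^ 2 + ‖y‖ ^ 2) := by
    have := mul_le_mul_of_nonneg_left (two_mul_le_add_sq ‖x‖ ‖y‖) hγ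
    linarith
  linarith [neg_abs_le ⟪x, y⟫]

theorem stmt_2_general {V : Type*} [NormedAddCommGroup V] [InnerProductSpace ℝ V]
    (V₁ V₂ : Submodule ℝ V) (γ : ℝ) (hγ0 : 0 ≤ γ)
    (hcorr : ∀ v₁ ∈ V₁, ∀ v₂ ∈ V₂, |⟪v₁, v₂⟫| ≤ γ * ‖v₁‖ * ‖v₂‖)
    (Δt : ℝ) (hΔt : 0 < Δt)
    (a₁ b₁ : V) (ha₁ : a₁ ∈ V₁) (hb₁ : b₁ ∈ V₁)
    (a₂ b₂ : V) (ha₂ : a₂ ∈ V₂) (hb₂ : b₂ ∈ V₂) :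
    (1 / Δt) * (‖b₁‖ ^ 2 + ‖b₂‖ ^ 2) + (1 / Δt) * (⟪a₂, b₁⟫ + ⟪a₁, b₂⟫) ≥
      ((2 - γ) / (2 * Δt)) * (‖b₁‖ ^ 2 + ‖b₂‖ ^ 2)
        - (γ / (2 * Δt)) * (‖a₁‖ ^ 2 + ‖a₂‖ ^ 2) := by
  have h₁ := neg_half_mul_norm_sq_add_le_inner hγ0 (hcorr b₁ hb₁ a₂ ha₂)
  have h₂ := neg_half_mul_norm_sq_add_le_inner hγ0 (hcorr a₁ ha₁ b₂ hb₂)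
  rw [real_inner_comm] at h₁
  calc ((2 - γ) / (2 * Δt)) * (‖b₁‖ ^ 2 + ‖b₂‖ ^ 2) - (γ / (2 * Δt)) * (‖a₁‖ ^ 2 + ‖a₂‖ ^ 2)
      = (1 / Δt) * (‖b₁‖ ^ 2 + ‖b₂‖ ^ 2 - γ / 2 * (‖b₁‖ ^ 2 + ‖a₂‖ ^ 2)
          - γ / 2 * (‖a₁‖ ^ 2 + ‖b₂‖ ^ 2)) := by
        field_simp
        ring
    _ ≤ (1 / Δt) * (‖b₁‖ ^ 2 + ‖b₂‖ ^ 2 + (⟪a₂, b₁⟫ + ⟪a₁, b₂⟫)) := by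
        gcongr
        linarith
    _ = _ := mul_add _ _ _

theorem stmt_2 {V : Type*} [NormedAddCommGroup V] [InnerProductSpace ℝ V]
    (V₁ V₂ : Submodule ℝ V) (γ : ℝ) (hγ0 : 0 ≤ γ) (hγ1 : γ < 1)
    (hcorr : ∀ v₁ ∈ V₁, ∀ v₂ ∈ V₂, |⟪v₁, v₂⟫| ≤ γ * ‖v₁‖ * ‖v₂‖)
    (Δt : ℝ) (hΔt : 0 < Δt)
    (a₁ b₁ : V) (ha₁ : a₁ ∈ V₁) (hb₁ : b₁ ∈ V₁)
    (a₂ b₂ : V) (ha₂ : a₂ ∈ V₂) (hb₂ : b₂ ∈ V₂) :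
    (1 / Δt) * (‖b₁‖ ^ 2 + ‖b₂‖ ^ 2) + (1 / Δt) * (⟪a₂, b₁⟫ + ⟪a₁, b₂⟫) ≥
      ((2 - γ) / (2 * Δt)) * (‖b₁‖ ^ 2 + ‖b₂‖ ^ 2)
        - (γ / (2 * Δt)) * (‖a₁‖ ^ 2 + ‖a₂‖ ^ 2) :=
  stmt_2_general V₁ V₂ γ hγ0 hcorr Δt hΔt a₁ b₁ ha₁ hb₁ a₂ b₂ ha₂ hb₂
end

section
/- Let F, G : ℝᵈ → ℝ be C², with ∇²F(x) positive semidefinite for all x and vᵀ(∇²G(x))v ≥ −b̲‖v‖² for all x, v, where b̲ ≥ 0. Suppose (uⁿ) satisfies the implicit Euler scheme (uⁿ⁺¹ − uⁿ)/Δt + ∇F(uⁿ⁺¹) + ∇G(uⁿ⁺¹) = 0 with Δt > 0 and Δt·b̲ ≤ 1. Then F(uⁿ⁺¹) + G(uⁿ⁺¹) ≤ F(uⁿ) + G(uⁿ) for all n. -/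
/-!
Expand F and G to second order at the new iterate `y = uⁿ⁺¹`: since `∇²F ≥ 0` and
`∇²G ≥ -b̲`, with `w = uⁿ - uⁿ⁺¹`,
`F uⁿ + G uⁿ ≥ F y + G y + ⟪∇F y + ∇G y, w⟫ - b̲/2 ‖w‖²`.
The scheme says `∇F y + ∇G y = w / Δt`, so the energy drops by at least
`(1/Δt - b̲/2) ‖w‖²`, which is nonnegative because `Δt b̲ ≤ 1`.
-/

open Set in
theorem taylor_lower_bound_of_le_deriv2 {φ φ' φ'' : ℝ → ℝ} {c a b : ℝ}
    (hφ : ∀ t, HasDerivAt φ (φ' t) t) (hφ' : ∀ t, HasDerivAt φ' (φ'' t) t)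
    (hc : ∀ t, c ≤ φ'' t) (hab : a ≤ b) :
    φ a + φ' a * (b - a) + c * (b - a) ^ 2 / 2 ≤ φ b := by
  have hφ'_mono : Monotone fun t => φ' t - c * t :=
    monotone_of_hasDerivAt_nonneg
      (fun t => by simpa only [mul_one] using (hφ' t).fun_sub ((hasDerivAt_id' t).const_mul c))
      fun t => sub_nonneg.2 (hc t)
  set ψ : ℝ → ℝ := fun t => φ t - φ' a * t - c / 2 * (t - a) ^ 2
  have hψ : ∀ t, HasDerivAt ψ (φ' t - φ' a - c * (t - a)) t := fun t => by
    refine (((hφ t).fun_sub ((hasDerivAt_id' t).const_mul (φ' a))).fun_sub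
      ((((hasDerivAt_id' t).sub_const a).fun_pow 2).const_mul (c / 2))).congr_deriv ?_
    ring
  have hψ_mono : MonotoneOn ψ (Ici a) :=
    monotoneOn_of_hasDerivWithinAt_nonneg (convex_Ici a)
      (fun t _ => (hψ t).continuousAt.continuousWithinAt)
      (fun t _ => (hψ t).hasDerivWithinAt)
      fun t ht => by
        rw [interior_Ici] at ht
        have := hφ'_mono (le_of_lt ht)
        simp only at this
        linarith
  have := hψ_mono self_mem_Ici hab hab
  simp only [ψ, sub_self] at this
  linarith

section LineRestriction

variable {E : Type*} [NormedAddCommGroup E] [NormedSpace ℝ E]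

theorem Differentiable.hasDerivAt_comp_add_smul {F : Type*} [NormedAddCommGroup F]
    [NormedSpace ℝ F] {f : E → F} (hf : Differentiable ℝ f) (x v : E) (t : ℝ) :
    HasDerivAt (fun s : ℝ => f (x + s • v)) (fderiv ℝ f (x + t • v) v) t := by
  have hline : HasDerivAt (fun s : ℝ => x + s • v) v t := by
    simpa using ((hasDerivAt_id t).smul_const v).const_add x
  exact (hf _).hasFDerivAt.comp_hasDerivAt t hline

theorem ContDiff.hasDerivAt_fderiv_comp_add_smul {F : Type*} [NormedAddCommGroup F]
    [NormedSpace ℝ F] {f : E → F} (hf : ContDiff ℝ 2 f) (x v : E) (t : ℝ) :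
    HasDerivAt (fun s : ℝ => fderiv ℝ f (x + s • v) v)
      (iteratedFDeriv ℝ 2 f (x + t • v) ![v, v]) t := by
  have hf' : Differentiable ℝ (fderiv ℝ f) :=
    (hf.fderiv_right (m := 1) (by norm_num)).differentiable one_ne_zero
  rw [iteratedFDeriv_two_apply]
  exact (ContinuousLinearMap.apply ℝ F v).hasFDerivAt.comp_hasDerivAt t
    (hf'.hasDerivAt_comp_add_smul x v t)

theorem taylor_lower_bound_of_le_hessian {f : E → ℝ} (hf : ContDiff ℝ 2 f) {m : ℝ}
    (hm : ∀ x v, m * ‖v‖ ^ 2 ≤ iteratedFDeriv ℝ 2 f x ![v, v]) (x y : E) :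
    f x + fderiv ℝ f x (y - x) + m * ‖y - x‖ ^ 2 / 2 ≤ f y := by
  simpa only [zero_smul, add_zero, one_smul, add_sub_cancel, sub_zero, one_pow, mul_one]
    using taylor_lower_bound_of_le_deriv2
    ((hf.differentiable two_ne_zero).hasDerivAt_comp_add_smul x (y - x))
    (hf.hasDerivAt_fderiv_comp_add_smul x (y - x)) (fun t => hm _ (y - x)) zero_le_one

end LineRestriction

theorem energy_le_of_implicitEuler_step {E : Type*} [NormedAddCommGroup E] [InnerProductSpace ℝ E]
    [CompleteSpace E] {F G : E → ℝ} (hF : ContDiff ℝ 2 F) (hG : ContDiff ℝ 2 G)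
    (hFHess : ∀ x v, 0 ≤ iteratedFDeriv ℝ 2 F x ![v, v]) {b : ℝ}
    (hGHess : ∀ x v, -b * ‖v‖ ^ 2 ≤ iteratedFDeriv ℝ 2 G x ![v, v])
    {Δt : ℝ} (hΔt : 0 < Δt) (hstep : Δt * b ≤ 1) {x y : E}
    (hxy : Δt⁻¹ • (y - x) + gradient F y + gradient G y = 0) :
    F y + G y ≤ F x + G x := by
  have hFx := taylor_lower_bound_of_le_hessian hF (m := 0) (by simpa using hFHess) y x
  have hGx := taylor_lower_bound_of_le_hessian hG hGHess y x
  have hgrad : gradient F y + gradient G y = Δt⁻¹ • (x - y) := by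
    linear_combination (norm := module) hxy
  have hslope : fderiv ℝ F y (x - y) + fderiv ℝ G y (x - y) = Δt⁻¹ * ‖x - y‖ ^ 2 := by
    rw [← inner_gradient_left, ← inner_gradient_left, ← inner_add_left, hgrad,
      real_inner_smul_left, real_inner_self_eq_norm_sq]
  have hb : b ≤ Δt⁻¹ := by rwa [← one_div, le_div_iff₀' hΔt]
  have hdissipation : 0 ≤ (Δt⁻¹ - b / 2) * ‖x - y‖ ^ 2 :=
    mul_nonneg (by linarith [inv_pos.2 hΔt]) (sq_nonneg _)
  linarith

theorem stmt_6_general {d : ℕ} (F G : EuclideanSpace ℝ (Fin d) → ℝ)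
    (hF : ContDiff ℝ 2 F) (hG : ContDiff ℝ 2 G)
    (hFHess : ∀ x v : EuclideanSpace ℝ (Fin d), 0 ≤ iteratedFDeriv ℝ 2 F x ![v, v])
    (bbar : ℝ)
    (hGHess : ∀ x v : EuclideanSpace ℝ (Fin d),
      -bbar * ‖v‖ ^ 2 ≤ iteratedFDeriv ℝ 2 G x ![v, v])
    (u : ℕ → EuclideanSpace ℝ (Fin d)) (Δt : ℝ) (hΔt : 0 < Δt)
    (hstep : Δt * bbar ≤ 1)
    (hscheme : ∀ n : ℕ,
      (Δt)⁻¹ • (u (n + 1) - u n) + gradient F (u (n + 1)) + gradient G (u (n + 1)) = 0) :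
    ∀ n : ℕ, F (u (n + 1)) + G (u (n + 1)) ≤ F (u n) + G (u n) := fun n =>
  energy_le_of_implicitEuler_step hF hG hFHess hGHess hΔt hstep (hscheme n)

theorem stmt_6 {d : ℕ} (F G : EuclideanSpace ℝ (Fin d) → ℝ)
    (hF : ContDiff ℝ 2 F) (hG : ContDiff ℝ 2 G)
    (hFHess : ∀ x v : EuclideanSpace ℝ (Fin d), 0 ≤ iteratedFDeriv ℝ 2 F x ![v, v])
    (bbar : ℝ) (hb : 0 ≤ bbar)
    (hGHess : ∀ x v : EuclideanSpace ℝ (Fin d),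
      -bbar * ‖v‖ ^ 2 ≤ iteratedFDeriv ℝ 2 G x ![v, v])
    (u : ℕ → EuclideanSpace ℝ (Fin d)) (Δt : ℝ) (hΔt : 0 < Δt)
    (hstep : Δt * bbar ≤ 1)
    (hscheme : ∀ n : ℕ,
      (Δt)⁻¹ • (u (n + 1) - u n) + gradient F (u (n + 1)) + gradient G (u (n + 1)) = 0) :
    ∀ n : ℕ, F (u (n + 1)) + G (u (n + 1)) ≤ F (u n) + G (u n) :=
  stmt_6_general F G hF hG hFHess bbar hGHess u Δt hΔt hstep hscheme
end

section
/- Let F, G : ℝᵈ → ℝ be C². Suppose |vᵀ(∇²G(x))v| ≤ B‖v‖² and vᵀ(∇²F(x))v ≤ C‖v‖_V² for all x, v, where ‖·‖_V is a norm on ℝᵈ and B, C > 0. Suppose (uⁿ) satisfies the forward Euler scheme (uⁿ⁺¹ − uⁿ)/Δt + ∇F(uⁿ) + ∇G(uⁿ) = 0 with Δt > 0. If Δt·((C/2)·sup_{v ≠ 0}(‖v‖_V²/‖v‖²) + B) ≤ 1, then F(uⁿ⁺¹) + G(uⁿ⁺¹) ≤ F(uⁿ) + G(uⁿ). -/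
/-!
Both energies satisfy a second-order Taylor upper bound along the step, so `E = F + G` obeys the
descent inequality `E (x - τ ∇E x) ≤ E x - τ (1 - τ L / 2) ‖∇E x‖²` with `L = C S + B`.
An explicit Euler step is exactly `x ↦ x - Δt ∇E x`, and the step-size condition makes the
factor `1 - Δt L / 2` nonnegative.
-/

open scoped RealInnerProductSpace

lemma le_add_deriv_add_half_of_deriv2_le {g g' g'' : ℝ → ℝ} {M : ℝ}
    (hg : ∀ t, HasDerivAt g (g' t) t) (hg' : ∀ t, HasDerivAt g' (g'' t) t)
    (hM : ∀ t, g'' t ≤ M) :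
    g 1 ≤ g 0 + g' 0 + M / 2 := by
  set h : ℝ → ℝ := fun s => g s - g' 0 * s - M / 2 * s ^ 2
  set h' : ℝ → ℝ := fun s => g' s - g' 0 - M * s
  have hh : ∀ s, HasDerivAt h (h' s) s := fun s => by
    refine (((hg s).sub ((hasDerivAt_id s).const_mul (g' 0))).sub
      ((hasDerivAt_pow 2 s).const_mul (M / 2))).congr_deriv ?_
    simp only [h', mul_one]; ring
  have hh'_anti : Antitone h' := antitone_of_hasDerivAt_nonpos
    (fun s => ((hg' s).sub_const (g' 0)).sub ((hasDerivAt_id s).const_mul M))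
    (fun s => by simpa using hM s)
  obtain ⟨c, hc, hslope⟩ := exists_hasDerivAt_eq_slope h h' zero_lt_one
    (fun s _ => (hh s).continuousAt.continuousWithinAt) (fun s _ => hh s)
  have hdecr : h 1 - h 0 ≤ 0 := by
    simpa [hslope, h'] using hh'_anti hc.1.le
  simp only [h] at hdecr
  linarith

theorem ContDiff.le_add_fderiv_add_half {E : Type*} [NormedAddCommGroup E] [NormedSpace ℝ E]
    {f : E → ℝ} (hf : ContDiff ℝ 2 f) (x w : E) {M : ℝ}
    (hM : ∀ y, iteratedFDeriv ℝ 2 f y ![w, w] ≤ M) :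
    f (x + w) ≤ f x + fderiv ℝ f x w + M / 2 := by
  have hline : ∀ t : ℝ, HasDerivAt (fun s : ℝ => x + s • w) w t := fun t => by
    simpa using ((hasDerivAt_id t).smul_const w).const_add x
  have hDf : Differentiable ℝ f := hf.differentiable (by norm_num)
  have hD2f : Differentiable ℝ (fderiv ℝ f) :=
    (hf.fderiv_right (m := 1) le_rfl).differentiable (by norm_num)
  simpa using le_add_deriv_add_half_of_deriv2_le (M := M)
    (g := fun t => f (x + t • w)) (g' := fun t => fderiv ℝ f (x + t • w) w)
    (g'' := fun t => iteratedFDeriv ℝ 2 f (x + t • w) ![w, w])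
    (fun t => (hDf _).hasFDerivAt.comp_hasDerivAt t (hline t))
    (fun t => by
      simpa [iteratedFDeriv_two_apply] using
        ((hD2f _).hasFDerivAt.comp_hasDerivAt t (hline t)).clm_apply (hasDerivAt_const t w))
    (fun t => hM _)

theorem gradient_add {𝕜 E : Type*} [RCLike 𝕜] [NormedAddCommGroup E] [InnerProductSpace 𝕜 E]
    [CompleteSpace E] {f g : E → 𝕜} {x : E} (hf : DifferentiableAt 𝕜 f x)
    (hg : DifferentiableAt 𝕜 g x) : gradient (f + g) x = gradient f x + gradient g x := by
  simp [gradient, fderiv_add hf hg]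

theorem ContDiff.le_sub_smul_gradient {E : Type*} [NormedAddCommGroup E]
    [InnerProductSpace ℝ E] [CompleteSpace E] {f : E → ℝ} (hf : ContDiff ℝ 2 f) {L : ℝ}
    (hL : ∀ y v, iteratedFDeriv ℝ 2 f y ![v, v] ≤ L * ‖v‖ ^ 2) (x : E) (τ : ℝ) :
    f (x - τ • gradient f x) ≤ f x - τ * (1 - τ * L / 2) * ‖gradient f x‖ ^ 2 := by
  have htaylor := hf.le_add_fderiv_add_half x (-(τ • gradient f x)) fun y => hL y _
  rw [← inner_gradient_left, inner_neg_right, real_inner_smul_right, real_inner_self_eq_norm_sq,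
    norm_neg, norm_smul, mul_pow, Real.norm_eq_abs, sq_abs, ← sub_eq_add_neg] at htaylor
  linarith

theorem eq_sub_smul_of_inv_smul_sub_add_eq_zero {K V : Type*} [Field K] [AddCommGroup V]
    [Module K V] {τ : K} (hτ : τ ≠ 0) {x y v : V} (h : τ⁻¹ • (y - x) + v = 0) :
    y = x - τ • v := by
  calc y = x + τ • (τ⁻¹ • (y - x)) := by rw [smul_inv_smul₀ hτ]; abel
    _ = x - τ • v := by rw [eq_neg_of_add_eq_zero_left h, smul_neg, sub_eq_add_neg]

theorem stmt_7_general {d : ℕ} (F G : EuclideanSpace ℝ (Fin d) → ℝ)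
    (hF : ContDiff ℝ 2 F) (hG : ContDiff ℝ 2 G)
    (nV : EuclideanSpace ℝ (Fin d) → ℝ)
    (B C : ℝ) (hC : 0 < C)
    (hGHess : ∀ x v : EuclideanSpace ℝ (Fin d),
      |iteratedFDeriv ℝ 2 G x ![v, v]| ≤ B * ‖v‖ ^ 2)
    (hFHess : ∀ x v : EuclideanSpace ℝ (Fin d),
      iteratedFDeriv ℝ 2 F x ![v, v] ≤ C * (nV v) ^ 2)
    (u : ℕ → EuclideanSpace ℝ (Fin d)) (Δt : ℝ) (hΔt : 0 < Δt)
    (S : ℝ) (hS : ∀ v : EuclideanSpace ℝ (Fin d), (nV v) ^ 2 ≤ S * ‖v‖ ^ 2)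
    (hstep : Δt * ((C / 2) * S + B) ≤ 1)
    (hscheme : ∀ n : ℕ,
      (Δt)⁻¹ • (u (n + 1) - u n) + gradient F (u n) + gradient G (u n) = 0) :
    ∀ n : ℕ, F (u (n + 1)) + G (u (n + 1)) ≤ F (u n) + G (u n) := by
  intro n
  have hHess : ∀ y v, iteratedFDeriv ℝ 2 (F + G) y ![v, v] ≤ (C * S + B) * ‖v‖ ^ 2 := by
    intro y v
    rw [iteratedFDeriv_add_apply hF.contDiffAt hG.contDiffAt, add_apply]
    nlinarith [hFHess y v, mul_le_mul_of_nonneg_left (hS v) hC.le,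
      (le_abs_self _).trans (hGHess y v)]
  set g := gradient (F + G) (u n) with hg
  have hnext : u (n + 1) = u n - Δt • g := by
    refine eq_sub_smul_of_inv_smul_sub_add_eq_zero hΔt.ne' ?_
    rw [hg, gradient_add (hF.differentiable (by norm_num) _) (hG.differentiable (by norm_num) _),
      ← add_assoc]
    exact hscheme n
  have hBg : 0 ≤ B * ‖g‖ ^ 2 := (abs_nonneg _).trans (hGHess (u n) g)
  have hrate : 0 ≤ Δt * (1 - Δt * (C * S + B) / 2) * ‖g‖ ^ 2 := by
    nlinarith [mul_nonneg (mul_nonneg hΔt.le (sub_nonneg.2 hstep)) (sq_nonneg ‖g‖),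
      mul_nonneg (sq_nonneg Δt) hBg]
  rw [hnext]
  exact (ContDiff.le_sub_smul_gradient (f := F + G) (hF.add hG) hHess (u n) Δt).trans
    (sub_le_self _ hrate)

theorem stmt_7 {d : ℕ} (F G : EuclideanSpace ℝ (Fin d) → ℝ)
    (hF : ContDiff ℝ 2 F) (hG : ContDiff ℝ 2 G)
    (nV : EuclideanSpace ℝ (Fin d) → ℝ) (hnV : ∀ v, 0 ≤ nV v)
    (B C : ℝ) (hB : 0 < B) (hC : 0 < C)
    (hGHess : ∀ x v : EuclideanSpace ℝ (Fin d),
      |iteratedFDeriv ℝ 2 G x ![v, v]| ≤ B * ‖v‖ ^ 2)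
    (hFHess : ∀ x v : EuclideanSpace ℝ (Fin d),
      iteratedFDeriv ℝ 2 F x ![v, v] ≤ C * (nV v) ^ 2)
    (u : ℕ → EuclideanSpace ℝ (Fin d)) (Δt : ℝ) (hΔt : 0 < Δt)
    (S : ℝ) (hS : ∀ v : EuclideanSpace ℝ (Fin d), (nV v) ^ 2 ≤ S * ‖v‖ ^ 2)
    (hstep : Δt * ((C / 2) * S + B) ≤ 1)
    (hscheme : ∀ n : ℕ,
      (Δt)⁻¹ • (u (n + 1) - u n) + gradient F (u n) + gradient G (u n) = 0) :
    ∀ n : ℕ, F (u (n + 1)) + G (u (n + 1)) ≤ F (u n) + G (u n) :=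
  stmt_7_general F G hF hG nV B C hC hGHess hFHess u Δt hΔt S hS hstep hscheme
end

section
/- Let V = ℝᵈ with an inner product (·,·) and energy norm ‖v‖_a² = vᵀAv for a symmetric positive semidefinite matrix A. Let V₁, V₂ be subspaces with V = V₁ ⊕ V₂ and γ := sup over nonzero v₁ ∈ V₁, v₂ ∈ V₂ of (v₁, v₂)/(‖v₁‖‖v₂‖) satisfying γ < 1. Suppose sequences u₁ⁿ ∈ V₁, u₂ⁿ ∈ V₂ satisfy the linear partially explicit scheme: ((u₁ⁿ⁺¹ − u₁ⁿ)/Δt + (u₂ⁿ − u₂ⁿ⁻¹)/Δt, v₁) + (A(u₁ⁿ⁺¹ + u₂ⁿ), v₁) = 0 for all v₁ ∈ V₁, and ((u₁ⁿ − u₁ⁿ⁻¹)/Δt + (u₂ⁿ⁺¹ − u₂ⁿ)/Δt, v₂) + (A(u₁ⁿ⁺¹ + u₂ⁿ), v₂) = 0 for all v₂ ∈ V₂. If (Δt/2)·sup_{0 ≠ v₂ ∈ V₂}(‖v₂‖_a²/‖v₂‖²) ≤ 1 − γ, then with uⁿ := u₁ⁿ + u₂ⁿ, the quantity (γ/(2Δt))(‖u₁ⁿ⁺¹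 − u₁ⁿ‖² + ‖u₂ⁿ⁺¹ − u₂ⁿ‖²) + (1/2)‖uⁿ⁺¹‖_a² is nonincreasing in n. -/
/-!
Test the first equation with `a = u₁ⁿ⁺¹ - u₁ⁿ`, the second with `b = u₂ⁿ⁺¹ - u₂ⁿ`, and add.
Writing `w = u₁ⁿ⁺¹ + u₂ⁿ`, so that `uⁿ⁺¹ = w + b` and `uⁿ = w - a`, symmetry of `A` turns
`2 (A w, a + b)` into the energy increment `‖uⁿ⁺¹‖²_a - ‖uⁿ‖²_a` corrected by `‖b‖²_a - ‖a‖²_a`.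
The mixed terms `(a, u₂ⁿ - u₂ⁿ⁻¹)` and `(u₁ⁿ - u₁ⁿ⁻¹, b)` cost at most `γ/2` times sums of squares,
the CFL condition absorbs `‖b‖²_a` into `‖b‖²`, and what is left over is `(1 - γ) ‖a‖² ≥ 0`.
-/

open scoped RealInnerProductSpace

section

variable {E : Type*} [NormedAddCommGroup E] [InnerProductSpace ℝ E]

theorem LinearMap.IsSymmetric.inner_map_add_sub_inner_map_sub {A : E →ₗ[ℝ] E}
    (hA : A.IsSymmetric) (w a b : E) :
    ⟪A (w + b), w + b⟫ - ⟪A (w - a), w - a⟫ = 2 * ⟪A w, a + b⟫ + ⟪A b, b⟫ - ⟪A a, a⟫ := by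
  simp only [map_add, map_sub, inner_add_left, inner_add_right, inner_sub_left, inner_sub_right]
  rw [hA b w, hA a w, real_inner_comm (A w) b, real_inner_comm (A w) a]
  ring

def StrengthenedCauchySchwarz (V₁ V₂ : Submodule ℝ E) (γ : ℝ) : Prop :=
  ∀ v₁ ∈ V₁, ∀ v₂ ∈ V₂, ⟪v₁, v₂⟫ ≤ γ * ‖v₁‖ * ‖v₂‖

theorem StrengthenedCauchySchwarz.neg_le_inner {V₁ V₂ : Submodule ℝ E} {γ : ℝ}
    (h : StrengthenedCauchySchwarz V₁ V₂ γ) (hγ : 0 ≤ γ) {v₁ v₂ : E} (h₁ : v₁ ∈ V₁)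
    (h₂ : v₂ ∈ V₂) : -(γ / 2 * (‖v₁‖ ^ 2 + ‖v₂‖ ^ 2)) ≤ ⟪v₁, v₂⟫ := by
  have hneg := h (-v₁) (V₁.neg_mem h₁) v₂ h₂
  rw [inner_neg_left, norm_neg] at hneg
  nlinarith [mul_nonneg hγ (sq_nonneg (‖v₁‖ - ‖v₂‖))]

theorem inner_add_add_mul_inner_eq_zero {Δt : ℝ} (hΔt : Δt ≠ 0) {x y z v : E}
    (h : ⟪Δt⁻¹ • x + Δt⁻¹ • y, v⟫ + ⟪z, v⟫ = 0) : ⟪x + y, v⟫ + Δt * ⟪z, v⟫ = 0 := by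
  rw [← smul_add, real_inner_smul_left] at h
  field_simp at h
  simpa using h

theorem partiallyExplicit_energy_step {A : E →ₗ[ℝ] E} (hA : A.IsPositive)
    {V₁ V₂ : Submodule ℝ E} {γ Δt : ℝ} (hγ0 : 0 ≤ γ) (hγ1 : γ ≤ 1) (hΔt : 0 ≤ Δt)
    (hcorr : StrengthenedCauchySchwarz V₁ V₂ γ)
    (hCFL : ∀ v₂ ∈ V₂, Δt / 2 * ⟪A v₂, v₂⟫ ≤ (1 - γ) * ‖v₂‖ ^ 2)
    {w a a' b b' : E} (ha : a ∈ V₁) (ha' : a' ∈ V₁) (hb : b ∈ V₂) (hb' : b' ∈ V₂)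
    (h₁ : ⟪a + b', a⟫ + Δt * ⟪A w, a⟫ = 0) (h₂ : ⟪a' + b, b⟫ + Δt * ⟪A w, b⟫ = 0) :
    γ * (‖a‖ ^ 2 + ‖b‖ ^ 2) + Δt * ⟪A (w + b), w + b⟫
      ≤ γ * (‖a'‖ ^ 2 + ‖b'‖ ^ 2) + Δt * ⟪A (w - a), w - a⟫ := by
  rw [inner_add_left, real_inner_self_eq_norm_sq, real_inner_comm] at h₁
  rw [inner_add_left, real_inner_self_eq_norm_sq] at h₂
  have henergy := congrArg (Δt * ·) (hA.isSymmetric.inner_map_add_sub_inner_map_sub w a b)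
  rw [inner_add_right (A w) a b] at henergy
  have hAa : 0 ≤ Δt * ⟪A a, a⟫ := mul_nonneg hΔt (hA.inner_nonneg_left a)
  have ha_sq : 0 ≤ (1 - γ) * ‖a‖ ^ 2 := mul_nonneg (by linarith) (sq_nonneg _)
  linarith [hcorr.neg_le_inner hγ0 ha hb', hcorr.neg_le_inner hγ0 ha' hb, hCFL b hb]

end

theorem stmt_11_general {d : ℕ}
    (A : EuclideanSpace ℝ (Fin d) →ₗ[ℝ] EuclideanSpace ℝ (Fin d))
    (hAsym : ∀ u v, ⟪A u, v⟫ = ⟪u, A v⟫)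
    (hApsd : ∀ v, 0 ≤ ⟪A v, v⟫)
    (V₁ V₂ : Submodule ℝ (EuclideanSpace ℝ (Fin d)))
    (γ : ℝ) (hγ0 : 0 ≤ γ) (hγ1 : γ < 1)
    (hcorr : ∀ v₁ ∈ V₁, ∀ v₂ ∈ V₂, ⟪v₁, v₂⟫ ≤ γ * ‖v₁‖ * ‖v₂‖)
    (Δt : ℝ) (hΔt : 0 < Δt)
    (u₁ u₂ : ℕ → EuclideanSpace ℝ (Fin d))
    (hu₁ : ∀ n, u₁ n ∈ V₁) (hu₂ : ∀ n, u₂ n ∈ V₂)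
    (hscheme₁ : ∀ n, 1 ≤ n → ∀ v₁ ∈ V₁,
      ⟪(Δt)⁻¹ • (u₁ (n + 1) - u₁ n) + (Δt)⁻¹ • (u₂ n - u₂ (n - 1)), v₁⟫
        + ⟪A (u₁ (n + 1) + u₂ n), v₁⟫ = 0)
    (hscheme₂ : ∀ n, 1 ≤ n → ∀ v₂ ∈ V₂,
      ⟪(Δt)⁻¹ • (u₁ n - u₁ (n - 1)) + (Δt)⁻¹ • (u₂ (n + 1) - u₂ n), v₂⟫
        + ⟪A (u₁ (n + 1) + u₂ n), v₂⟫ = 0)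
    (hCFL : ∀ v₂ ∈ V₂, v₂ ≠ 0 → (Δt / 2) * ⟪A v₂, v₂⟫ ≤ (1 - γ) * ‖v₂‖ ^ 2) :
    ∀ n, 1 ≤ n →
      (γ / (2 * Δt)) * (‖u₁ (n + 1) - u₁ n‖ ^ 2 + ‖u₂ (n + 1) - u₂ n‖ ^ 2)
        + (1 / 2) * ⟪A (u₁ (n + 1) + u₂ (n + 1)), u₁ (n + 1) + u₂ (n + 1)⟫
      ≤ (γ / (2 * Δt)) * (‖u₁ n - u₁ (n - 1)‖ ^ 2 + ‖u₂ n - u₂ (n - 1)‖ ^ 2)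
        + (1 / 2) * ⟪A (u₁ n + u₂ n), u₁ n + u₂ n⟫ := by
  have hA : A.IsPositive := A.isPositive_iff.mpr ⟨hAsym, hApsd⟩
  have hCFL₀ : ∀ v₂ ∈ V₂, Δt / 2 * ⟪A v₂, v₂⟫ ≤ (1 - γ) * ‖v₂‖ ^ 2 := by
    intro v₂ hv₂
    rcases eq_or_ne v₂ 0 with rfl | hne
    · simp
    · exact hCFL v₂ hv₂ hne
  intro n hn
  have ha : u₁ (n + 1) - u₁ n ∈ V₁ := V₁.sub_mem (hu₁ _) (hu₁ _)
  have ha' : u₁ n - u₁ (n - 1) ∈ V₁ := V₁.sub_mem (hu₁ _) (hu₁ _)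
  have hb : u₂ (n + 1) - u₂ n ∈ V₂ := V₂.sub_mem (hu₂ _) (hu₂ _)
  have hb' : u₂ n - u₂ (n - 1) ∈ V₂ := V₂.sub_mem (hu₂ _) (hu₂ _)
  have key := partiallyExplicit_energy_step hA hγ0 hγ1.le hΔt.le hcorr hCFL₀ ha ha' hb hb'
    (inner_add_add_mul_inner_eq_zero hΔt.ne' (hscheme₁ n hn _ ha))
    (inner_add_add_mul_inner_eq_zero hΔt.ne' (hscheme₂ n hn _ hb))
  rw [add_add_sub_cancel, add_sub_sub_cancel, add_comm (u₂ n)] at key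
  have hscale (X S : ℝ) : 2 * Δt * (γ / (2 * Δt) * X + 1 / 2 * S) = γ * X + Δt * S := by
    field_simp
  rwa [← mul_le_mul_iff_of_pos_left (by positivity : (0 : ℝ) < 2 * Δt), hscale, hscale]

theorem stmt_11 {d : ℕ}
    (A : EuclideanSpace ℝ (Fin d) →ₗ[ℝ] EuclideanSpace ℝ (Fin d))
    (hAsym : ∀ u v, ⟪A u, v⟫ = ⟪u, A v⟫)
    (hApsd : ∀ v, 0 ≤ ⟪A v, v⟫)
    (V₁ V₂ : Submodule ℝ (EuclideanSpace ℝ (Fin d)))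
    (hcompl : IsCompl V₁ V₂)
    (γ : ℝ) (hγ0 : 0 ≤ γ) (hγ1 : γ < 1)
    (hcorr : ∀ v₁ ∈ V₁, ∀ v₂ ∈ V₂, ⟪v₁, v₂⟫ ≤ γ * ‖v₁‖ * ‖v₂‖)
    (Δt : ℝ) (hΔt : 0 < Δt)
    (u₁ u₂ : ℕ → EuclideanSpace ℝ (Fin d))
    (hu₁ : ∀ n, u₁ n ∈ V₁) (hu₂ : ∀ n, u₂ n ∈ V₂)
    (hscheme₁ : ∀ n, 1 ≤ n → ∀ v₁ ∈ V₁,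
      ⟪(Δt)⁻¹ • (u₁ (n + 1) - u₁ n) + (Δt)⁻¹ • (u₂ n - u₂ (n - 1)), v₁⟫
        + ⟪A (u₁ (n + 1) + u₂ n), v₁⟫ = 0)
    (hscheme₂ : ∀ n, 1 ≤ n → ∀ v₂ ∈ V₂,
      ⟪(Δt)⁻¹ • (u₁ n - u₁ (n - 1)) + (Δt)⁻¹ • (u₂ (n + 1) - u₂ n), v₂⟫
        + ⟪A (u₁ (n + 1) + u₂ n), v₂⟫ = 0)
    (hCFL : ∀ v₂ ∈ V₂, v₂ ≠ 0 → (Δt / 2) * ⟪A v₂, v₂⟫ ≤ (1 - γ) * ‖v₂‖ ^ 2) :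
    ∀ n, 1 ≤ n →
      (γ / (2 * Δt)) * (‖u₁ (n + 1) - u₁ n‖ ^ 2 + ‖u₂ (n + 1) - u₂ n‖ ^ 2)
        + (1 / 2) * ⟪A (u₁ (n + 1) + u₂ (n + 1)), u₁ (n + 1) + u₂ (n + 1)⟫
      ≤ (γ / (2 * Δt)) * (‖u₁ n - u₁ (n - 1)‖ ^ 2 + ‖u₂ n - u₂ (n - 1)‖ ^ 2)
        + (1 / 2) * ⟪A (u₁ n + u₂ n), u₁ n + u₂ n⟫ :=
  stmt_11_general A hAsym hApsd V₁ V₂ γ hγ0 hγ1 hcorr Δt hΔt u₁ u₂ hu₁ hu₂ hscheme₁ hscheme₂ hCFL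
end

section
/- Let V be a real inner product space, F : V → ℝ with gradient f, and suppose δ²F(u)(v,v) ≥ c‖v‖_V² and δ²F exists along segments with Taylor remainder form. Let G : V → ℝ with gradient g and |δ²G(u)(v,v)| ≤ B‖v‖². Assume the partially explicit scheme identities hold for sequences u₁ⁿ ∈ V₁, u₂ⁿ ∈ V₂ (V = V₁ ⊕ V₂, correlation constant γ < 1), and assume the splitting-error bound (f(uⁿ⁺¹) − f(u₁ⁿ⁺¹ + u₂ⁿ), uⁿ⁺¹ − uⁿ) ≤ (c/2)‖uⁿ⁺¹ − uⁿ‖_V² + ((1 − γ)/Δt − (1 + γ)B/2)(‖u₁ⁿ⁺¹ − u₁ⁿ‖² + ‖u₂ⁿ⁺¹ − u₂ⁿ‖²). Then (γ/(2Δt))Σᵢ‖uᵢⁿ⁺¹ − uᵢⁿ‖² + F(uⁿ⁺¹) + G(uⁿ⁺¹) ≤ (γ/(2Δt))Σᵢ‖uᵢⁿ − uᵢⁿ⁻¹‖² + F(uⁿ) + G(uⁿ). -/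
/-!
Test the scheme with the increments `u₁ⁿ⁺¹ - u₁ⁿ ∈ V₁` and `u₂ⁿ⁺¹ - u₂ⁿ ∈ V₂` and add the two
equations. The implicit part contributes `(1/Δt)(‖u₁ⁿ⁺¹ - u₁ⁿ‖² + ‖u₂ⁿ⁺¹ - u₂ⁿ‖²)`, while the
explicit lag produces the cross terms `(u₂ⁿ - u₂ⁿ⁻¹, u₁ⁿ⁺¹ - u₁ⁿ)` and `(u₁ⁿ - u₁ⁿ⁻¹, u₂ⁿ⁺¹ - u₂ⁿ)`,
which the strengthened Cauchy–Schwarz inequality bounds by `γ/2` times the sum of the old and new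
increments squared. The Taylor bounds for `F` and `G`, the splitting-error bound and
`‖v₁ + v₂‖² ≤ (1 + γ)(‖v₁‖² + ‖v₂‖²)` then turn `(f(u₁ⁿ⁺¹ + u₂ⁿ) + g(uⁿ), uⁿ⁺¹ - uⁿ)` into an
upper bound for the energy increment, and exactly the margin `(1 - γ)/Δt` is consumed.
-/

open scoped RealInnerProductSpace

lemma two_mul_abs_le_of_abs_le_mul_mul {γ x y p : ℝ} (hγ : 0 ≤ γ) (h : |p| ≤ γ * x * y) :
    2 * |p| ≤ γ * (x ^ 2 + y ^ 2) := by
  nlinarith [mul_nonneg hγ (sq_nonneg (x - y))]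

section InnerProductSpace

variable {V : Type*} [NormedAddCommGroup V] [InnerProductSpace ℝ V]

lemma norm_add_sq_le_of_abs_inner_le {γ : ℝ} {x y : V} (hγ : 0 ≤ γ)
    (h : |⟪x, y⟫| ≤ γ * ‖x‖ * ‖y‖) :
    ‖x + y‖ ^ 2 ≤ (1 + γ) * (‖x‖ ^ 2 + ‖y‖ ^ 2) := by
  have := two_mul_abs_le_of_abs_le_mul_mul hγ h
  rw [norm_add_sq_real]
  linarith [le_abs_self ⟪x, y⟫]

lemma inner_add_eq_of_partially_explicit {V₁ V₂ : Submodule ℝ V} {τ : ℝ} {a₁ a₂ b₁ b₂ r : V}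
    (ha₁ : a₁ ∈ V₁) (ha₂ : a₂ ∈ V₂)
    (h₁ : ∀ v ∈ V₁, ⟪τ • a₁ + τ • b₂, v⟫ + ⟪r, v⟫ = 0)
    (h₂ : ∀ v ∈ V₂, ⟪τ • b₁ + τ • a₂, v⟫ + ⟪r, v⟫ = 0) :
    ⟪r, a₁ + a₂⟫ = -τ * (‖a₁‖ ^ 2 + ‖a₂‖ ^ 2 + ⟪a₁, b₂⟫ + ⟪b₁, a₂⟫) := by
  have e₁ := h₁ a₁ ha₁
  have e₂ := h₂ a₂ ha₂
  simp only [inner_add_left, real_inner_smul_left, real_inner_self_eq_norm_sq] at e₁ e₂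
  rw [real_inner_comm a₁ b₂] at e₁
  rw [inner_add_right]
  linarith

end InnerProductSpace

theorem stmt_17_general {V : Type*} [NormedAddCommGroup V] [InnerProductSpace ℝ V]
    (V₁ V₂ : Submodule ℝ V)
    (γ : ℝ) (hγ0 : 0 ≤ γ)
    (hcorr : ∀ v₁ ∈ V₁, ∀ v₂ ∈ V₂, |⟪v₁, v₂⟫| ≤ γ * ‖v₁‖ * ‖v₂‖)
    (nV : V → ℝ)
    (F G : V → ℝ) (f g : V → V)
    (c B : ℝ) (hB : 0 ≤ B)
    -- Taylor lower bound for F: F(b) = F(a) - (f(a), a - b) + ½δ²F(ξ), δ²F ≥ c‖·‖_V²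
    (hFTaylor : ∀ a b : V, F a - ⟪f a, a - b⟫ + (c / 2) * (nV (a - b)) ^ 2 ≤ F b)
    -- Taylor bound for G: |G(b) - G(a) - (g(a), b - a)| ≤ (B/2)‖b - a‖²
    (hGTaylor : ∀ a b : V, |G b - G a - ⟪g a, b - a⟫| ≤ (B / 2) * ‖b - a‖ ^ 2)
    (Δt : ℝ) (hΔt : 0 < Δt)
    (u₁ u₂ : ℕ → V) (hu₁ : ∀ n, u₁ n ∈ V₁) (hu₂ : ∀ n, u₂ n ∈ V₂)
    (hscheme₁ : ∀ n, 1 ≤ n → ∀ v₁ ∈ V₁,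
      ⟪(Δt)⁻¹ • (u₁ (n + 1) - u₁ n) + (Δt)⁻¹ • (u₂ n - u₂ (n - 1)), v₁⟫
        + ⟪f (u₁ (n + 1) + u₂ n) + g (u₁ n + u₂ n), v₁⟫ = 0)
    (hscheme₂ : ∀ n, 1 ≤ n → ∀ v₂ ∈ V₂,
      ⟪(Δt)⁻¹ • (u₁ n - u₁ (n - 1)) + (Δt)⁻¹ • (u₂ (n + 1) - u₂ n), v₂⟫
        + ⟪f (u₁ (n + 1) + u₂ n) + g (u₁ n + u₂ n), v₂⟫ = 0)
    (hsplit : ∀ n, 1 ≤ n →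
      ⟪f (u₁ (n + 1) + u₂ (n + 1)) - f (u₁ (n + 1) + u₂ n),
          (u₁ (n + 1) + u₂ (n + 1)) - (u₁ n + u₂ n)⟫
        ≤ (c / 2) * (nV ((u₁ (n + 1) + u₂ (n + 1)) - (u₁ n + u₂ n))) ^ 2
          + ((1 - γ) / Δt - (1 + γ) * B / 2)
            * (‖u₁ (n + 1) - u₁ n‖ ^ 2 + ‖u₂ (n + 1) - u₂ n‖ ^ 2)) :
    ∀ n, 1 ≤ n →
      (γ / (2 * Δt)) * (‖u₁ (n + 1) - u₁ n‖ ^ 2 + ‖u₂ (n + 1) - u₂ n‖ ^ 2)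
          + F (u₁ (n + 1) + u₂ (n + 1)) + G (u₁ (n + 1) + u₂ (n + 1))
        ≤ (γ / (2 * Δt)) * (‖u₁ n - u₁ (n - 1)‖ ^ 2 + ‖u₂ n - u₂ (n - 1)‖ ^ 2)
          + F (u₁ n + u₂ n) + G (u₁ n + u₂ n) := by
  intro n hn
  set a₁ := u₁ (n + 1) - u₁ n
  set a₂ := u₂ (n + 1) - u₂ n
  set b₁ := u₁ n - u₁ (n - 1)
  set b₂ := u₂ n - u₂ (n - 1)
  have ha₁ : a₁ ∈ V₁ := V₁.sub_mem (hu₁ _) (hu₁ _)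
  have ha₂ : a₂ ∈ V₂ := V₂.sub_mem (hu₂ _) (hu₂ _)
  have hb₁ : b₁ ∈ V₁ := V₁.sub_mem (hu₁ _) (hu₁ _)
  have hb₂ : b₂ ∈ V₂ := V₂.sub_mem (hu₂ _) (hu₂ _)
  have hd : (u₁ (n + 1) + u₂ (n + 1)) - (u₁ n + u₂ n) = a₁ + a₂ :=
    add_sub_add_comm _ _ _ _
  have htested := inner_add_eq_of_partially_explicit ha₁ ha₂ (hscheme₁ n hn) (hscheme₂ n hn)
  have hcross : Δt⁻¹ * -(⟪a₁, b₂⟫ + ⟪b₁, a₂⟫)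
      ≤ Δt⁻¹ * (γ / 2 * ((‖a₁‖ ^ 2 + ‖a₂‖ ^ 2) + (‖b₁‖ ^ 2 + ‖b₂‖ ^ 2))) := by
    gcongr
    linarith [two_mul_abs_le_of_abs_le_mul_mul hγ0 (hcorr _ ha₁ _ hb₂),
      two_mul_abs_le_of_abs_le_mul_mul hγ0 (hcorr _ hb₁ _ ha₂),
      neg_abs_le ⟪a₁, b₂⟫, neg_abs_le ⟪b₁, a₂⟫]
  have hGnorm : B / 2 * ‖a₁ + a₂‖ ^ 2 ≤ B / 2 * ((1 + γ) * (‖a₁‖ ^ 2 + ‖a₂‖ ^ 2)) := by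
    gcongr
    exact norm_add_sq_le_of_abs_inner_le hγ0 (hcorr _ ha₁ _ ha₂)
  have hF := hFTaylor (u₁ (n + 1) + u₂ (n + 1)) (u₁ n + u₂ n)
  have hG := (abs_le.mp (hGTaylor (u₁ n + u₂ n) (u₁ (n + 1) + u₂ (n + 1)))).2
  have hsp := hsplit n hn
  rw [hd] at hF hG hsp
  rw [inner_sub_left] at hsp
  rw [inner_add_left] at htested
  rw [show γ / (2 * Δt) = γ / 2 * Δt⁻¹ by ring]
  rw [show (1 - γ) / Δt = (1 - γ) * Δt⁻¹ by ring] at hsp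
  linarith

theorem stmt_17 {V : Type*} [NormedAddCommGroup V] [InnerProductSpace ℝ V]
    (V₁ V₂ : Submodule ℝ V) (hcompl : IsCompl V₁ V₂)
    (γ : ℝ) (hγ0 : 0 ≤ γ) (hγ1 : γ < 1)
    (hcorr : ∀ v₁ ∈ V₁, ∀ v₂ ∈ V₂, |⟪v₁, v₂⟫| ≤ γ * ‖v₁‖ * ‖v₂‖)
    (nV : V → ℝ) (hnV : ∀ v, 0 ≤ nV v)
    (F G : V → ℝ) (f g : V → V)
    (c B : ℝ) (hc : 0 ≤ c) (hB : 0 ≤ B)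
    -- Taylor lower bound for F: F(b) = F(a) - (f(a), a - b) + ½δ²F(ξ), δ²F ≥ c‖·‖_V²
    (hFTaylor : ∀ a b : V, F a - ⟪f a, a - b⟫ + (c / 2) * (nV (a - b)) ^ 2 ≤ F b)
    -- Taylor bound for G: |G(b) - G(a) - (g(a), b - a)| ≤ (B/2)‖b - a‖²
    (hGTaylor : ∀ a b : V, |G b - G a - ⟪g a, b - a⟫| ≤ (B / 2) * ‖b - a‖ ^ 2)
    (Δt : ℝ) (hΔt : 0 < Δt)
    (u₁ u₂ : ℕ → V) (hu₁ : ∀ n, u₁ n ∈ V₁) (hu₂ : ∀ n, u₂ n ∈ V₂)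
    (hscheme₁ : ∀ n, 1 ≤ n → ∀ v₁ ∈ V₁,
      ⟪(Δt)⁻¹ • (u₁ (n + 1) - u₁ n) + (Δt)⁻¹ • (u₂ n - u₂ (n - 1)), v₁⟫
        + ⟪f (u₁ (n + 1) + u₂ n) + g (u₁ n + u₂ n), v₁⟫ = 0)
    (hscheme₂ : ∀ n, 1 ≤ n → ∀ v₂ ∈ V₂,
      ⟪(Δt)⁻¹ • (u₁ n - u₁ (n - 1)) + (Δt)⁻¹ • (u₂ (n + 1) - u₂ n), v₂⟫
        + ⟪f (u₁ (n + 1) + u₂ n) + g (u₁ n + u₂ n), v₂⟫ = 0)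
    (hsplit : ∀ n, 1 ≤ n →
      ⟪f (u₁ (n + 1) + u₂ (n + 1)) - f (u₁ (n + 1) + u₂ n),
          (u₁ (n + 1) + u₂ (n + 1)) - (u₁ n + u₂ n)⟫
        ≤ (c / 2) * (nV ((u₁ (n + 1) + u₂ (n + 1)) - (u₁ n + u₂ n))) ^ 2
          + ((1 - γ) / Δt - (1 + γ) * B / 2)
            * (‖u₁ (n + 1) - u₁ n‖ ^ 2 + ‖u₂ (n + 1) - u₂ n‖ ^ 2)) :
    ∀ n, 1 ≤ n →
      (γ / (2 * Δt)) * (‖u₁ (n + 1) - u₁ n‖ ^ 2 + ‖u₂ (n + 1) - u₂ n‖ ^ 2)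
          + F (u₁ (n + 1) + u₂ (n + 1)) + G (u₁ (n + 1) + u₂ (n + 1))
        ≤ (γ / (2 * Δt)) * (‖u₁ n - u₁ (n - 1)‖ ^ 2 + ‖u₂ n - u₂ (n - 1)‖ ^ 2)
          + F (u₁ n + u₂ n) + G (u₁ n + u₂ n) :=
  stmt_17_general V₁ V₂ γ hγ0 hcorr nV F G f g c B hB hFTaylor hGTaylor Δt hΔt u₁ u₂ hu₁ hu₂
    hscheme₁ hscheme₂ hsplit
end
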